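/- The image of the Lusztig–Spaltenstein duality map for the symplectic Lie algebra equals the set of special type-C partitions: for every type-C partition d of size 2m, the C-collapse of d^t is a special type-C partition of size 2m, and conversely every special type-C partition of size 2m equals the C-collapse of d^t for some type-C partition d of size 2m. -/
import Mathlib


/-!
Partitions (Young diagrams) are represented as antitone, eventually-zero
functions `f : ℕ → ℕ`, where `f i` is the length of the `(i+1)`-st row.
-/

/-- `f : ℕ → ℕ` represents a partition (Young diagram). -/
def IsPartition (f : ℕ → ℕ) : Prop :=
  Antitone f ∧ ∃ N, ∀ i, N ≤ i → f i = 0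

/-- The size of a partition: the sum of its parts. -/
noncomputable def size (f : ℕ → ℕ) : ℕ := ∑' i, f i

/-- The sum of the `k` largest parts of a partition. -/
def psum (f : ℕ → ℕ) (k : ℕ) : ℕ := ∑ i ∈ Finset.range k, f i

/-- The multiplicity with which `p` occurs as a part. -/
noncomputable def mult (f : ℕ → ℕ) (p : ℕ) : ℕ := {i | f i = p}.ncard

/-- The transpose (conjugate) partition: `transpose f i` is the length of the
`(i+1)`-st column of `f`. -/
noncomputable def transpose (f : ℕ → ℕ) : ℕ → ℕ := fun i => {j | i < f j}.ncard

/-- The number of parts of a partition (the length of its first column). -/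
noncomputable def numParts (f : ℕ → ℕ) : ℕ := {j | 0 < f j}.ncard

/-- Type B: odd size, and every (positive) even part occurs with even multiplicity. -/
def IsTypeB (f : ℕ → ℕ) : Prop :=
  IsPartition f ∧ Odd (size f) ∧ ∀ p, 0 < p → Even p → Even (mult f p)

/-- Type C: even size, and every odd part occurs with even multiplicity. -/
def IsTypeC (f : ℕ → ℕ) : Prop :=
  IsPartition f ∧ Even (size f) ∧ ∀ p, Odd p → Even (mult f p)

/-- Type D: even size, and every (positive) even part occurs with even multiplicity. -/
def IsTypeD (f : ℕ → ℕ) : Prop :=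
  IsPartition f ∧ Even (size f) ∧ ∀ p, 0 < p → Even p → Even (mult f p)

/-- Dominance order `f ≼ g` between partitions of the same size. -/
def Dom (f g : ℕ → ℕ) : Prop :=
  size f = size g ∧ ∀ k, psum f k ≤ psum g k

/-- `c` is the X-collapse of `d`, where predicate `T` expresses "type X": `c` is
the greatest type-X partition of the same size dominated by `d`. -/
def IsCollapse (T : (ℕ → ℕ) → Prop) (d c : ℕ → ℕ) : Prop :=
  T c ∧ Dom c d ∧ ∀ e, T e → Dom e d → Dom e c

open Classical in
/-- The X-collapse of `d` (junk value if it does not exist). -/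
noncomputable def collapse (T : (ℕ → ℕ) → Prop) (d : ℕ → ℕ) : ℕ → ℕ :=
  if h : ∃ c, IsCollapse T d c then h.choose else fun _ => 0

/-- The B-collapse. -/
noncomputable def collapseB : (ℕ → ℕ) → ℕ → ℕ := collapse IsTypeB

/-- The C-collapse. -/
noncomputable def collapseC : (ℕ → ℕ) → ℕ → ℕ := collapse IsTypeC

/-- The D-collapse. -/
noncomputable def collapseD : (ℕ → ℕ) → ℕ → ℕ := collapse IsTypeD

/-- `d⁺`: add one box to the first row. -/
def boxPlus (f : ℕ → ℕ) : ℕ → ℕ := fun i => if i = 0 then f 0 + 1 else f i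

/-- `d⁻`: remove one box from the last row (for nonempty `d`). -/
noncomputable def boxMinus (f : ℕ → ℕ) : ℕ → ℕ :=
  fun i => if i = numParts f - 1 then f i - 1 else f i

/-- `∇(d)`: remove the first column (every part decreased by 1). -/
def delCol (f : ℕ → ℕ) : ℕ → ℕ := fun i => f i - 1

/-- `∇̌(d)`: remove the first row (delete one largest part). -/
def delRow (f : ℕ → ℕ) : ℕ → ℕ := fun i => f (i + 1)

/-- The metaplectic Lusztig–Spaltenstein map: the D-collapse of the transpose. -/
noncomputable def mLS (d : ℕ → ℕ) : ℕ → ℕ := collapseD (transpose d)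

/-- The map `d̃_SP`: the C-collapse of `(e⁺)⁻`. -/
noncomputable def mSP (e : ℕ → ℕ) : ℕ → ℕ := collapseC (boxMinus (boxPlus e))

/-- The metaplectic Barbasch–Vogan duality. -/
noncomputable def mBV (d : ℕ → ℕ) : ℕ → ℕ := mSP (mLS d)


/-! ### Auxiliary lemmas -/

section Aux

lemma psum_succ (f : ℕ → ℕ) (k : ℕ) : psum f (k+1) = psum f k + f k :=
  Finset.sum_range_succ f k

lemma psum_zero (f : ℕ → ℕ) : psum f 0 = 0 := by simp [psum]

lemma size_eq_psum {f : ℕ → ℕ} {N : ℕ} (h : ∀ i, N ≤ i → f i = 0) :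
    size f = psum f N :=
  tsum_eq_sum (fun b hb => h b (by simpa using Finset.mem_range.not.mp hb))

lemma dom_antisymm {f g : ℕ → ℕ} (h1 : Dom f g) (h2 : Dom g f) : f = g := by
  funext k
  have a1 := h1.2 (k+1); have a2 := h2.2 (k+1)
  have b1 := h1.2 k; have b2 := h2.2 k
  have e1 := psum_succ f k; have e2 := psum_succ g k
  omega

lemma collapse_eq_of {T : (ℕ → ℕ) → Prop} {d c : ℕ → ℕ} (h : IsCollapse T d c) :
    collapse T d = c := by
  have hex : ∃ c, IsCollapse T d c := ⟨c, h⟩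
  rw [collapse, dif_pos hex]
  have h2 := hex.choose_spec
  exact dom_antisymm (h.2.2 _ h2.1 h2.2.1) (h2.2.2 _ h.1 h.2.1)

lemma ncard_Iio (n : ℕ) : (Set.Iio n).ncard = n := by
  rw [show Set.Iio n = ↑(Finset.Iio n) by simp, Set.ncard_coe_finset]; simp

lemma ncard_Ico (a b : ℕ) : (Set.Ico a b).ncard = b - a := by
  rw [show Set.Ico a b = ↑(Finset.Ico a b) by simp, Set.ncard_coe_finset]; simp

lemma transpose_set_finite {f : ℕ → ℕ} {N : ℕ} (hN : ∀ j, N ≤ j → f j = 0) (i : ℕ) :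
    {j | i < f j}.Finite := by
  refine Set.Finite.subset (Set.finite_Iio N) (fun j hj => ?_)
  simp only [Set.mem_setOf_eq] at hj
  simp only [Set.mem_Iio]
  by_contra h
  push_neg at h
  have := hN j h
  omega

lemma transpose_eventually_zero {f : ℕ → ℕ} (hA : Antitone f) {i : ℕ} (hi : f 0 ≤ i) :
    transpose f i = 0 := by
  have : {j | i < f j} = (∅ : Set ℕ) := by
    ext j
    simp only [Set.mem_setOf_eq, Set.mem_empty_iff_false, iff_false, not_lt]
    exact le_trans (hA (Nat.zero_le j)) hi
  rw [transpose]; rw [this, Set.ncard_empty]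

lemma transpose_isPartition {f : ℕ → ℕ} (hf : IsPartition f) : IsPartition (transpose f) := by
  obtain ⟨hA, N, hN⟩ := hf
  constructor
  · intro i i' hii'
    exact Set.ncard_le_ncard (fun j hj => lt_of_le_of_lt hii' hj) (transpose_set_finite hN i)
  · exact ⟨f 0, fun i hi => transpose_eventually_zero hA hi⟩

lemma downward_closed_eq_Iio {S : Set ℕ} (hfin : S.Finite)
    (hdc : ∀ a b, a ≤ b → b ∈ S → a ∈ S) : S = Set.Iio S.ncard := by
  ext k
  simp only [Set.mem_Iio]
  constructor
  · intro hk
    have hsub : Set.Iio (k+1) ⊆ S := fun a ha => hdc a k (by simp only [Set.mem_Iio] at ha; omega) hk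
    have := Set.ncard_le_ncard hsub hfin
    rw [ncard_Iio] at this
    omega
  · intro hk
    by_contra hkS
    have hsub : S ⊆ Set.Iio k := by
      intro b hb
      simp only [Set.mem_Iio]
      by_contra hbk
      push_neg at hbk
      exact hkS (hdc k b hbk hb)
    have := Set.ncard_le_ncard hsub (Set.finite_Iio k)
    rw [ncard_Iio] at this
    omega

lemma lt_transpose_iff {f : ℕ → ℕ} (hA : Antitone f) {N : ℕ} (hN : ∀ j, N ≤ j → f j = 0)
    (i j : ℕ) : i < transpose f j ↔ j < f i := by
  have hfin := transpose_set_finite hN j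
  have hdc : ∀ a b, a ≤ b → b ∈ {k | j < f k} → a ∈ {k | j < f k} :=
    fun a b hab hb => lt_of_lt_of_le hb (hA hab)
  have hS := downward_closed_eq_Iio hfin hdc
  have : transpose f j = {k | j < f k}.ncard := rfl
  rw [this]
  constructor
  · intro h
    have hm : i ∈ Set.Iio ({k | j < f k}.ncard) := h
    rw [← hS] at hm
    exact hm
  · intro h
    have hm : i ∈ {k | j < f k} := h
    rw [hS] at hm
    exact hm

lemma transpose_transpose {f : ℕ → ℕ} (hf : IsPartition f) : transpose (transpose f) = f := by
  obtain ⟨hA, N, hN⟩ := hf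
  funext i
  have h1 : {j | i < transpose f j} = Set.Iio (f i) := by
    ext j
    simp only [Set.mem_setOf_eq, Set.mem_Iio]
    exact lt_transpose_iff hA hN i j
  have : transpose (transpose f) i = {j | i < transpose f j}.ncard := rfl
  rw [this, h1, ncard_Iio]

lemma size_transpose {f : ℕ → ℕ} (hf : IsPartition f) : size (transpose f) = size f := by
  obtain ⟨hA, N, hN⟩ := hf
  have hTz : ∀ i, f 0 ≤ i → transpose f i = 0 := fun i hi => transpose_eventually_zero hA hi
  rw [size_eq_psum hTz, size_eq_psum hN]
  unfold psum
  have e1 : ∀ i, transpose f i = ((Finset.range N).filter (fun j => i < f j)).card := by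
    intro i
    rw [← Set.ncard_coe_finset]
    have : {j | i < f j} = ↑((Finset.range N).filter (fun j => i < f j)) := by
      ext j
      simp only [Set.mem_setOf_eq, Finset.coe_filter, Finset.mem_range]
      constructor
      · intro h
        refine ⟨?_, h⟩
        by_contra hj
        push_neg at hj
        have := hN j hj
        omega
      · exact fun h => h.2
    rw [show transpose f i = {j | i < f j}.ncard from rfl, this]
  calc ∑ i ∈ Finset.range (f 0), transpose f i
      = ∑ i ∈ Finset.range (f 0), ∑ j ∈ Finset.range N, (if i < f j then 1 else 0) := by
        refine Finset.sum_congr rfl (fun i _ => ?_)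
        rw [e1 i, Finset.card_filter]
    _ = ∑ j ∈ Finset.range N, ∑ i ∈ Finset.range (f 0), (if i < f j then 1 else 0) :=
        Finset.sum_comm
    _ = ∑ j ∈ Finset.range N, f j := by
        refine Finset.sum_congr rfl (fun j hj => ?_)
        rw [← Finset.card_filter]
        have : (Finset.range (f 0)).filter (fun i => i < f j) = Finset.range (f j) := by
          ext i
          simp only [Finset.mem_filter, Finset.mem_range]
          have := hA (Nat.zero_le j)
          omega
        rw [this, Finset.card_range]

lemma mult_eq_sub {f : ℕ → ℕ} (hf : IsPartition f) {v : ℕ} (hv : 1 ≤ v) :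
    transpose f v ≤ transpose f (v-1) ∧ mult f v + transpose f v = transpose f (v-1) := by
  obtain ⟨hA, N, hN⟩ := hf
  have hfin1 := transpose_set_finite hN (v-1)
  have hsub : {j | v < f j} ⊆ {j | v - 1 < f j} := fun j hj => by
    simp only [Set.mem_setOf_eq] at *; omega
  have hdiff : {i | f i = v} = {j | v - 1 < f j} \ {j | v < f j} := by
    ext i
    simp only [Set.mem_setOf_eq, Set.mem_diff, not_lt]
    omega
  constructor
  · exact Set.ncard_le_ncard hsub hfin1
  · have := Set.ncard_diff_add_ncard_of_subset hsub hfin1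
    rw [show mult f v = ({j | v - 1 < f j} \ {j | v < f j}).ncard by rw [mult, hdiff]]
    rw [show transpose f v = {j | v < f j}.ncard from rfl,
        show transpose f (v-1) = {j | v - 1 < f j}.ncard from rfl]
    exact this

lemma transpose_parity_of_typeC {f : ℕ → ℕ} (hf : IsTypeC f) (a : ℕ) :
    transpose f (2*a) % 2 = transpose f (2*a+1) % 2 := by
  obtain ⟨hP, hEv, hm⟩ := hf
  have h1 := mult_eq_sub hP (v := 2*a+1) (by omega)
  have h2 := hm (2*a+1) (by exact ⟨a, by ring⟩)
  rw [Nat.even_iff] at h2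
  have : (2*a+1) - 1 = 2*a := by omega
  rw [this] at h1
  omega

end Aux


section Blocks

lemma block_decomp (f : ℕ → ℕ) {j k v : ℕ} (hjk : j ≤ k)
    (hv : ∀ i, j ≤ i → i < k → f i = v) :
    psum f k = psum f j + (k - j) * v := by
  unfold psum
  rw [Finset.range_eq_Ico,
      ← Finset.sum_Ico_consecutive (fun i => f i) (Nat.zero_le j) hjk,
      ← Finset.range_eq_Ico]
  congr 1
  calc ∑ i ∈ Finset.Ico j k, f i = ∑ _i ∈ Finset.Ico j k, v := by
        refine Finset.sum_congr rfl (fun i hi => ?_)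
        rw [Finset.mem_Ico] at hi
        exact hv i hi.1 hi.2
    _ = (k - j) * v := by rw [Finset.sum_const, Nat.card_Ico, smul_eq_mul]

/-- L1: at every boundary of a type-C-multiplicity partition, the partial sum is even. -/
lemma typeC_boundary_even {f : ℕ → ℕ} (hA : Antitone f)
    (hm : ∀ v, Odd v → Even (mult f v)) :
    ∀ k, (k = 0 ∨ f (k-1) ≠ f k) → Even (psum f k) := by
  intro k
  induction k using Nat.strong_induction_on with
  | _ k IH =>
  intro hk
  rcases Nat.eq_zero_or_pos k with hk0 | hk1
  · subst hk0; rw [psum_zero]; exact Even.zero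
  have hne : f (k-1) ≠ f k := hk.resolve_left (by omega)
  have hle : f k ≤ f (k-1) := hA (by omega)
  have hlt : f k < f (k-1) := lt_of_le_of_ne hle (fun h => hne h.symm)
  set v := f (k-1) with hv
  have hv1 : 1 ≤ v := by omega
  have hex : ∃ j, f j ≤ v := ⟨k-1, le_rfl⟩
  set j := Nat.find hex with hjdef
  have hj : f j ≤ v := Nat.find_spec hex
  have hjmin : ∀ i, i < j → v < f i := fun i hi => by
    have := Nat.find_min hex hi; omega
  have hjk : j < k := by
    have : j ≤ k - 1 := Nat.find_min' hex le_rfl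
    omega
  have hblock : ∀ i, j ≤ i → i < k → f i = v := by
    intro i h1 h2
    have l1 : f i ≤ v := le_trans (hA h1) hj
    have l2 : v ≤ f i := by
      have : f (k-1) ≤ f i := hA (by omega)
      omega
    omega
  have hsum := block_decomp f (le_of_lt hjk) hblock
  have hmult : mult f v = k - j := by
    have hset : {i | f i = v} = Set.Ico j k := by
      ext i
      simp only [Set.mem_setOf_eq, Set.mem_Ico]
      constructor
      · intro hfi
        constructor
        · by_contra h
          push_neg at h
          have := hjmin i h
          omega
        · by_contra h
          push_neg at h
          have : f i ≤ f k := hA h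
          omega
      · intro ⟨h1, h2⟩
        exact hblock i h1 h2
    rw [mult, hset, ncard_Ico]
  have hjeven : Even (psum f j) := by
    rcases Nat.eq_zero_or_pos j with hj0 | hj1
    · rw [hj0, psum_zero]; exact Even.zero
    · refine IH j hjk (Or.inr ?_)
      have := hjmin (j-1) (by omega)
      omega
  have hprod : Even ((k - j) * v) := by
    rcases Nat.even_or_odd v with he | ho
    · exact he.mul_left _
    · have h2 := hm v ho
      rw [hmult] at h2
      exact h2.mul_right v
  rw [hsum]
  exact hjeven.add hprod

/-- L2: if a partial sum of a type-C-multiplicity partition is odd, we are strictly inside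
a block of equal odd parts. -/
lemma typeC_odd_psum {f : ℕ → ℕ} (hA : Antitone f)
    (hm : ∀ v, Odd v → Even (mult f v)) {k : ℕ} (hodd : Odd (psum f k)) :
    Odd (f k) ∧ f (k-1) = f k := by
  have hk1 : 1 ≤ k := by
    rcases Nat.eq_zero_or_pos k with h | h
    · subst h; rw [psum_zero] at hodd; simp [Nat.odd_iff] at hodd
    · exact h
  have heq : f (k-1) = f k := by
    by_contra h
    have := typeC_boundary_even hA hm k (Or.inr h)
    rw [Nat.even_iff] at this
    rw [Nat.odd_iff] at hodd
    omega
  refine ⟨?_, heq⟩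
  set v := f (k-1) with hv
  have hex : ∃ j, f j ≤ v := ⟨k-1, le_rfl⟩
  set j := Nat.find hex with hjdef
  have hj : f j ≤ v := Nat.find_spec hex
  have hjmin : ∀ i, i < j → v < f i := fun i hi => by
    have := Nat.find_min hex hi; omega
  have hjk : j ≤ k - 1 := Nat.find_min' hex le_rfl
  have hblock : ∀ i, j ≤ i → i < k → f i = v := by
    intro i h1 h2
    have l1 : f i ≤ v := le_trans (hA h1) hj
    have l2 : v ≤ f i := by
      have : f (k-1) ≤ f i := hA (by omega)
      omega
    omega
  have hsum := block_decomp f (show j ≤ k by omega) hblock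
  have hjeven : Even (psum f j) := by
    rcases Nat.eq_zero_or_pos j with hj0 | hj1
    · rw [hj0, psum_zero]; exact Even.zero
    · refine typeC_boundary_even hA hm j (Or.inr ?_)
      have := hjmin (j-1) (by omega)
      omega
  have hoddprod : Odd ((k - j) * v) := by
    rw [Nat.odd_iff] at hodd ⊢
    rw [Nat.even_iff] at hjeven
    omega
  have := (Nat.odd_mul.mp hoddprod).2
  rw [← heq]
  exact this

/-- L3: converse, boundary-evenness implies type-C multiplicities. -/
lemma typeC_of_boundary_even {f : ℕ → ℕ} (hA : Antitone f) {N : ℕ}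
    (hN : ∀ i, N ≤ i → f i = 0)
    (hB : ∀ k, (k = 0 ∨ f (k-1) ≠ f k) → Even (psum f k)) :
    ∀ v, Odd v → Even (mult f v) := by
  intro v hv
  have hv1 : 1 ≤ v := by rw [Nat.odd_iff] at hv; omega
  have exJ : ∃ j, f j ≤ v := ⟨N, by rw [hN N le_rfl]; omega⟩
  have exK : ∃ k, f k < v := ⟨N, by rw [hN N le_rfl]; omega⟩
  set j := Nat.find exJ with hjdef
  set k := Nat.find exK with hkdef
  have hj : f j ≤ v := Nat.find_spec exJ
  have hk : f k < v := Nat.find_spec exK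
  have hjmin : ∀ i, i < j → v < f i := fun i hi => by
    have := Nat.find_min exJ hi; omega
  have hkmin : ∀ i, i < k → v ≤ f i := fun i hi => by
    have := Nat.find_min exK hi; omega
  have hjk : j ≤ k := Nat.find_min' exJ (by omega)
  have hblock : ∀ i, j ≤ i → i < k → f i = v := by
    intro i h1 h2
    have := le_trans (hA h1) hj
    have := hkmin i h2
    omega
  have hset : {i | f i = v} = Set.Ico j k := by
    ext i
    simp only [Set.mem_setOf_eq, Set.mem_Ico]
    constructor
    · intro hfi
      constructor
      · by_contra h
        push_neg at h
        have := hjmin i h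
        omega
      · by_contra h
        push_neg at h
        have : f i ≤ f k := hA h
        omega
    · intro ⟨h1, h2⟩
      exact hblock i h1 h2
  have hmult : mult f v = k - j := by rw [mult, hset, ncard_Ico]
  have hjeven : Even (psum f j) := by
    refine hB j ?_
    rcases Nat.eq_zero_or_pos j with hj0 | hj1
    · exact Or.inl hj0
    · refine Or.inr ?_
      have := hjmin (j-1) (by omega)
      omega
  have hkeven : Even (psum f k) := by
    refine hB k ?_
    rcases Nat.eq_zero_or_pos k with hk0 | hk1
    · exact Or.inl hk0
    · refine Or.inr ?_
      have := hkmin (k-1) (by omega)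
      omega
  have hsum := block_decomp f hjk hblock
  have hprodeven : Even ((k - j) * v) := by
    rw [Nat.even_iff] at hjeven hkeven ⊢
    omega
  rw [hmult]
  rcases Nat.even_mul.mp hprodeven with h | h
  · exact h
  · rw [Nat.even_iff] at h; rw [Nat.odd_iff] at hv; omega

end Blocks


section Coll

/-- The "keep" condition of the explicit C-collapse construction. -/
def keepC (f : ℕ → ℕ) (k : ℕ) : Prop :=
  Even (psum f k) ∨ (Odd (f k) ∧ f (k-1) = f k)

open Classical in
/-- Corrected partial sums of the C-collapse. -/
noncomputable def qq (f : ℕ → ℕ) (k : ℕ) : ℕ :=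
  if keepC f k then psum f k else psum f k - 1

/-- The explicit C-collapse. -/
noncomputable def coll (f : ℕ → ℕ) (k : ℕ) : ℕ := qq f (k+1) - qq f k

lemma qq_cases (f : ℕ → ℕ) (k : ℕ) :
    (qq f k = psum f k ∧ (psum f k % 2 = 0 ∨ (f k % 2 = 1 ∧ f (k-1) = f k)))
    ∨ (qq f k + 1 = psum f k ∧ psum f k % 2 = 1 ∧ ¬(f k % 2 = 1 ∧ f (k-1) = f k)) := by
  unfold qq keepC
  split
  case isTrue h =>
    left
    refine ⟨rfl, ?_⟩
    rcases h with h | ⟨h1, h2⟩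
    · left; exact Nat.even_iff.mp h
    · right; exact ⟨Nat.odd_iff.mp h1, h2⟩
  case isFalse h =>
    push_neg at h
    obtain ⟨h1, h2⟩ := h
    rw [Nat.even_iff] at h1
    right
    refine ⟨by omega, by omega, fun hc => h2 (Nat.odd_iff.mpr hc.1) hc.2⟩

lemma succ2 (m : ℕ) : m + 2 = m + 1 + 1 := rfl

lemma qq_zero (f : ℕ → ℕ) : qq f 0 = 0 := by
  unfold qq
  rw [if_pos (show keepC f 0 from Or.inl (by rw [psum_zero]; exact Even.zero))]
  exact psum_zero f

lemma qq_mono (f : ℕ → ℕ) (k : ℕ) : qq f k ≤ qq f (k+1) := by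
  have h1 := qq_cases f k
  have h2 := qq_cases f (k+1)
  rw [show k+1-1 = k from rfl] at h2
  have hs := psum_succ f k
  omega

lemma psum_coll (f : ℕ → ℕ) (k : ℕ) : psum (coll f) k = qq f k := by
  induction k with
  | zero => rw [psum_zero, qq_zero]
  | succ n ih =>
    rw [psum_succ, ih]
    have := qq_mono f n
    unfold coll
    omega

lemma coll_antitone (f : ℕ → ℕ) (hA : Antitone f) : Antitone (coll f) := by
  refine antitone_nat_of_succ_le (fun n => ?_)
  have h1 := qq_cases f n
  have h2 := qq_cases f (n+1)
  have h3 := qq_cases f (n+2)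
  rw [show n+1-1 = n from rfl] at h2
  rw [show n+2-1 = n+1 from rfl] at h3
  have hs1 := psum_succ f n
  have hs2 := psum_succ f (n+1)
  have ha : f (n+1) ≤ f n := hA (by omega)
  have hb : f (n+2) ≤ f (n+1) := hA (by omega)
  simp only [succ2] at h3 hb
  unfold coll
  omega

lemma psum_stable (f : ℕ → ℕ) {N : ℕ} (hN : ∀ i, N ≤ i → f i = 0) {k : ℕ} (hk : N ≤ k) :
    psum f k = psum f N := by
  induction k with
  | zero => have h : N = 0 := by omega
            rw [h]
  | succ n ih =>
    rcases Nat.lt_or_ge N (n+1) with h | h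
    · rw [psum_succ, hN n (by omega), ih (by omega)]
      omega
    · have h' : N = n+1 := by omega
      rw [h']

lemma qq_stable (f : ℕ → ℕ) {N : ℕ} (hN : ∀ i, N ≤ i → f i = 0)
    (hEv : Even (psum f N)) {k : ℕ} (hk : N ≤ k) : qq f k = psum f N := by
  have hp := psum_stable f hN hk
  unfold qq
  rw [if_pos (show keepC f k from Or.inl (by rw [hp]; exact hEv)), hp]

lemma coll_boundary (f : ℕ → ℕ) :
    ∀ k, (k = 0 ∨ coll f (k-1) ≠ coll f k) → Even (psum (coll f) k) := by
  intro k hk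
  rw [psum_coll, Nat.even_iff]
  by_contra hodd
  rcases Nat.eq_zero_or_pos k with h0 | h1
  · subst h0; rw [qq_zero] at hodd; exact hodd rfl
  obtain ⟨n, rfl⟩ : ∃ n, k = n + 1 := ⟨k-1, by omega⟩
  have hne : coll f n ≠ coll f (n+1) := by
    rcases hk with h | h
    · exact absurd h (by omega)
    · simpa using h
  apply hne
  clear hk
  have h1 := qq_cases f n
  have h2 := qq_cases f (n+1)
  have h3 := qq_cases f (n+2)
  rw [show n+1-1 = n from rfl] at h2
  rw [show n+2-1 = n+1 from rfl] at h3
  simp only [succ2] at h3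
  have hs1 := psum_succ f n
  have hs2 := psum_succ f (n+1)
  have e2 : qq f (n+1) = psum f (n+1) ∧ psum f (n+1) % 2 = 1 ∧ f (n+1) % 2 = 1 ∧ f n = f (n+1) := by
    clear h1 h3 hne hs1 hs2
    omega
  clear hodd h2
  have e3 : qq f (n+1+1) = psum f (n+1) + f (n+1) := by
    clear h1 hs1 hne
    omega
  clear h3
  have e1 : qq f n = psum f n := by
    clear e3 hne hs2
    omega
  unfold coll
  clear h1 hne
  omega

lemma coll_max (f : ℕ → ℕ) (hA : Antitone f) {e : ℕ → ℕ} (he : IsTypeC e)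
    (hdom : ∀ k, psum e k ≤ psum f k) : ∀ k, psum e k ≤ qq f k := by
  intro k
  by_contra hlt
  push_neg at hlt
  rcases Nat.eq_zero_or_pos k with h0 | h1
  · subst h0; rw [psum_zero] at hlt; omega
  obtain ⟨n, rfl⟩ : ∃ n, k = n + 1 := ⟨k-1, by omega⟩
  have hq := qq_cases f (n+1)
  rw [show n+1-1 = n from rfl] at hq
  have hle := hdom (n+1)
  have heq : psum e (n+1) = psum f (n+1) := by omega
  have hodd : Odd (psum e (n+1)) := by
    rw [Nat.odd_iff, heq]
    omega
  have h2 := typeC_odd_psum he.1.1 he.2.2 hodd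
  rw [show n+1-1 = n from rfl] at h2
  rw [Nat.odd_iff] at h2
  have h3 := hdom (n+2)
  simp only [succ2] at h3
  have h4 := hdom n
  have hs1 := psum_succ f n
  have hs2 := psum_succ f (n+1)
  have hs1' := psum_succ e n
  have hs2' := psum_succ e (n+1)
  have haf : f (n+1) ≤ f n := hA (by omega)
  omega

lemma coll_isCollapse (f : ℕ → ℕ) (hA : Antitone f) {N : ℕ} (hN : ∀ i, N ≤ i → f i = 0)
    (hEv : Even (size f)) : IsCollapse IsTypeC f (coll f) ∧ size (coll f) = size f := by
  have hEvN : Even (psum f N) := by rw [← size_eq_psum hN]; exact hEv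
  have collzero : ∀ i, N ≤ i → coll f i = 0 := fun i hi => by
    unfold coll
    rw [qq_stable f hN hEvN hi, qq_stable f hN hEvN (by omega : N ≤ i + 1)]
    omega
  have hsize : size (coll f) = size f := by
    rw [size_eq_psum collzero, psum_coll, qq_stable f hN hEvN le_rfl, ← size_eq_psum hN]
  refine ⟨⟨⟨⟨coll_antitone f hA, N, collzero⟩, by rw [hsize]; exact hEv,
      typeC_of_boundary_even (coll_antitone f hA) collzero (coll_boundary f)⟩,
    ⟨hsize, fun k => by rw [psum_coll]; have := qq_cases f k; omega⟩,
    fun e heT hedom => ⟨hedom.1.trans hsize.symm, fun k => by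
      rw [psum_coll]; exact coll_max f hA heT hedom.2 k⟩⟩, hsize⟩

lemma psum_even_even (f : ℕ → ℕ) (hpair : ∀ a, f (2*a) % 2 = f (2*a+1) % 2) (a : ℕ) :
    psum f (2*a) % 2 = 0 := by
  induction a with
  | zero => rw [Nat.mul_zero, psum_zero]
  | succ n ih =>
    have h1 : psum f (2*(n+1)) = psum f (2*n) + f (2*n) + f (2*n+1) := by
      rw [show 2*(n+1) = (2*n+1)+1 by ring, psum_succ, psum_succ]
    have := hpair n
    omega

lemma coll_pairing (f : ℕ → ℕ) (hpair : ∀ a, f (2*a) % 2 = f (2*a+1) % 2) (a : ℕ) :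
    coll f (2*a) % 2 = coll f (2*a+1) % 2 := by
  have he1 := psum_even_even f hpair a
  have he2 := psum_even_even f hpair (a+1)
  have hq1 : qq f (2*a) = psum f (2*a) := by
    have := qq_cases f (2*a); omega
  have hq2 : qq f (2*(a+1)) = psum f (2*(a+1)) := by
    have := qq_cases f (2*(a+1)); omega
  have hm1 := qq_mono f (2*a)
  have hm2 := qq_mono f (2*a+1)
  have hrw : 2*(a+1) = (2*a+1)+1 := by ring
  rw [hrw] at hq2 he2
  unfold coll
  omega

/-- A partition with evenly-paired row parities has type-C transpose. -/
lemma typeC_transpose_of_pairing {g : ℕ → ℕ} (hg : IsPartition g) (hEv : Even (size g))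
    (hpair : ∀ a, g (2*a) % 2 = g (2*a+1) % 2) : IsTypeC (transpose g) := by
  refine ⟨transpose_isPartition hg, by rw [size_transpose hg]; exact hEv, ?_⟩
  intro v hv
  have hv1 : 1 ≤ v := by rw [Nat.odd_iff] at hv; omega
  have h1 := mult_eq_sub (transpose_isPartition hg) hv1
  rw [transpose_transpose hg] at h1
  obtain ⟨a, rfl⟩ : ∃ a, v = 2*a+1 := ⟨v/2, by rw [Nat.odd_iff] at hv; omega⟩
  rw [show 2*a+1-1 = 2*a from rfl] at h1
  have := hpair a
  rw [Nat.even_iff]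
  omega

end Coll

/-- the image of the Lusztig–Spaltenstein duality map
`d ↦ C-collapse of dᵗ` on type-C partitions of size `2m` equals the set of
special type-C partitions of size `2m`. -/
theorem stmt_19 (m : ℕ) :
    (∀ d : ℕ → ℕ, IsTypeC d → size d = 2 * m →
      IsTypeC (collapseC (transpose d)) ∧
      IsTypeC (transpose (collapseC (transpose d))) ∧
      size (collapseC (transpose d)) = 2 * m) ∧
    (∀ e : ℕ → ℕ, IsTypeC e → IsTypeC (transpose e) → size e = 2 * m →
      ∃ d : ℕ → ℕ, IsTypeC d ∧ size d = 2 * m ∧ collapseC (transpose d) = e) := by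
  constructor
  · intro d hd hsz
    obtain ⟨⟨hA, N, hN⟩, hEv, hm⟩ := hd
    have hdP : IsPartition d := ⟨hA, N, hN⟩
    have hfP : IsPartition (transpose d) := transpose_isPartition hdP
    obtain ⟨hfA, M, hM⟩ := hfP
    have hfsz : size (transpose d) = 2*m := by rw [size_transpose hdP, hsz]
    have hfEv : Even (size (transpose d)) := by rw [hfsz]; exact ⟨m, by ring⟩
    obtain ⟨hIC, hcsz⟩ := coll_isCollapse (transpose d) hfA hM hfEv
    have hce : collapseC (transpose d) = coll (transpose d) := collapse_eq_of hIC
    rw [hce]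
    have hpair : ∀ a, transpose d (2*a) % 2 = transpose d (2*a+1) % 2 :=
      transpose_parity_of_typeC ⟨hdP, hEv, hm⟩
    refine ⟨hIC.1, ?_, by rw [hcsz, hfsz]⟩
    exact typeC_transpose_of_pairing hIC.1.1 (by rw [hcsz, hfsz]; exact ⟨m, by ring⟩)
      (coll_pairing (transpose d) hpair)
  · intro e hC hCt hsz
    have heP := hC.1
    refine ⟨transpose e, hCt, by rw [size_transpose heP, hsz], ?_⟩
    rw [transpose_transpose heP]
    exact collapse_eq_of ⟨hC, ⟨rfl, fun k => le_rfl⟩, fun e' _ h => h⟩
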